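/- If u₁ ∈ L²_{r₁}(ℝ^{d₁}) and u₂ ∈ L²_{r₂}(ℝ^{d₂}) with r₁ ≤ 0 and r₂ ≤ 0, then the tensor product u₁ ⊗ u₂ (defined by (u₁⊗u₂)(x,y) = u₁(x)u₂(y)) belongs to L²_{r₁+r₂}(ℝ^{d₁+d₂}). -/

import Mathlib

/-!
By Fubini, the Fourier transform of `u₁ ⊗ u₂` is `û₁ ⊗ û₂`. Since `r₁, r₂ ≤ 0` and
`1 + |ξ|² + |η|²` dominates both `1 + |ξ|²` and `1 + |η|²`, the weight satisfies
`(1 + |ξ|² + |η|²) ^ (r₁ + r₂) ≤ (1 + |ξ|²) ^ r₁ * (1 + |η|²) ^ r₂`, so the weighted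
`|(u₁ ⊗ u₂)^|²` is dominated by the product of the two integrable weighted `|ûᵢ|²`.
The argument runs on `WithLp 2 (U × V)` for arbitrary finite-dimensional `U`, `V`, and is
transported to `ℝ^(d₁ + d₂)` along a linear isometry.
-/

open MeasureTheory
open scoped FourierTransform RealInnerProductSpace

theorem one_add_add_rpow_le_mul_rpow {a b r₁ r₂ : ℝ} (ha : 0 ≤ a) (hb : 0 ≤ b)
    (hr₁ : r₁ ≤ 0) (hr₂ : r₂ ≤ 0) :
    (1 + (a + b)) ^ (r₁ + r₂) ≤ (1 + a) ^ r₁ * (1 + b) ^ r₂ := by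
  rw [Real.rpow_add (by positivity)]
  gcongr ?_ * ?_
  · exact Real.rpow_le_rpow_of_nonpos (by positivity) (by linarith) hr₁
  · exact Real.rpow_le_rpow_of_nonpos (by positivity) (by linarith) hr₂

theorem aestronglyMeasurable_of_mul_left {X : Type*} [MeasurableSpace X] {μ : Measure X}
    {w f : X → ℝ} (hw : Measurable w) (hw₀ : ∀ x, w x ≠ 0)
    (h : AEStronglyMeasurable (fun x => w x * f x) μ) : AEStronglyMeasurable f μ := by
  refine (hw.inv.aestronglyMeasurable.mul h).congr (ae_of_all _ fun x => ?_)
  simp [hw₀ x]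

section Sobolev

variable {U V : Type*} [NormedAddCommGroup U] [InnerProductSpace ℝ U] [FiniteDimensional ℝ U]
  [MeasurableSpace U] [BorelSpace U]
  [NormedAddCommGroup V] [InnerProductSpace ℝ V] [FiniteDimensional ℝ V]
  [MeasurableSpace V] [BorelSpace V]

def MemSobolevL2 (r : ℝ) (u : U → ℂ) : Prop :=
  Integrable fun ξ : U => (1 + ‖ξ‖ ^ 2) ^ r * ‖𝓕 u ξ‖ ^ 2

theorem memSobolevL2_comp_linearIsometryEquiv_iff {r : ℝ} {u : V → ℂ} (A : U ≃ₗᵢ[ℝ] V) :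
    MemSobolevL2 r (u ∘ A) ↔ MemSobolevL2 r u := by
  rw [MemSobolevL2, MemSobolevL2, ← A.measurePreserving.integrable_comp_emb
    A.toHomeomorph.measurableEmbedding]
  simp only [Real.fourier_comp_linearIsometry]
  simp only [Function.comp_def, LinearIsometryEquiv.norm_map]

theorem MemSobolevL2.aestronglyMeasurable_norm_fourier_sq {r : ℝ} {u : U → ℂ}
    (hu : MemSobolevL2 r u) : AEStronglyMeasurable (fun ξ => ‖𝓕 u ξ‖ ^ 2) volume :=
  aestronglyMeasurable_of_mul_left (by fun_prop) (fun ξ => by positivity) hu.aestronglyMeasurable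

-- No integrability is needed: `integral_prod_mul` holds unconditionally, with junk value `0`.
theorem fourier_mul_fst_snd (u₁ : U → ℂ) (u₂ : V → ℂ) (ξ : WithLp 2 (U × V)) :
    𝓕 (fun x : WithLp 2 (U × V) => u₁ x.fst * u₂ x.snd) ξ = 𝓕 u₁ ξ.fst * 𝓕 u₂ ξ.snd := by
  rw [Real.fourier_eq, Real.fourier_eq, Real.fourier_eq,
    ← (WithLp.volume_preserving_symm_measurableEquiv_toLp_prod U V).symm.integral_comp',
    ← integral_prod_mul]
  congr 1
  ext x
  simp only [WithLp.prod_inner_apply, neg_add, AddChar.map_add_eq_mul, Circle.smul_def,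
    Circle.coe_mul, smul_eq_mul, MeasurableEquiv.symm_symm, MeasurableEquiv.toLp_apply,
    WithLp.ofLp_fst, WithLp.ofLp_snd, WithLp.toLp_fst, WithLp.toLp_snd]
  ring

theorem MemSobolevL2.mul_fst_snd {r₁ r₂ : ℝ} {u₁ : U → ℂ} {u₂ : V → ℂ}
    (hr₁ : r₁ ≤ 0) (hr₂ : r₂ ≤ 0) (hu₁ : MemSobolevL2 r₁ u₁) (hu₂ : MemSobolevL2 r₂ u₂) :
    MemSobolevL2 (r₁ + r₂) fun x : WithLp 2 (U × V) => u₁ x.fst * u₂ x.snd := by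
  rw [MemSobolevL2, ← (WithLp.volume_preserving_toLp U V).integrable_comp_emb
    (MeasurableEquiv.toLp 2 (U × V)).measurableEmbedding]
  refine (hu₁.mul_prod hu₂).mono' ?_ (ae_of_all _ fun x => ?_)
  · simp only [Function.comp_def, fourier_mul_fst_snd, WithLp.prod_norm_sq_eq_of_L2, norm_mul,
      mul_pow, WithLp.toLp_fst, WithLp.toLp_snd]
    have hweight : Measurable fun x : U × V => (1 + (‖x.1‖ ^ 2 + ‖x.2‖ ^ 2)) ^ (r₁ + r₂) := by
      fun_prop
    exact hweight.aestronglyMeasurable.mul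
      (hu₁.aestronglyMeasurable_norm_fourier_sq.comp_fst.mul
        hu₂.aestronglyMeasurable_norm_fourier_sq.comp_snd)
  · rw [Function.comp_apply, Real.norm_of_nonneg (by positivity)]
    simp only [fourier_mul_fst_snd, WithLp.prod_norm_sq_eq_of_L2, norm_mul, mul_pow,
      WithLp.toLp_fst, WithLp.toLp_snd]
    calc _ ≤ (1 + ‖x.1‖ ^ 2) ^ r₁ * (1 + ‖x.2‖ ^ 2) ^ r₂ * (‖𝓕 u₁ x.1‖ ^ 2 * ‖𝓕 u₂ x.2‖ ^ 2) := by
          gcongr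
          exact one_add_add_rpow_le_mul_rpow (by positivity) (by positivity) hr₁ hr₂
      _ = _ := by ring

end Sobolev

noncomputable def EuclideanSpace.finAddEquivL2Prod (n m : ℕ) :
    EuclideanSpace ℝ (Fin (n + m)) ≃ₗᵢ[ℝ]
      WithLp 2 (EuclideanSpace ℝ (Fin n) × EuclideanSpace ℝ (Fin m)) :=
  (LinearIsometryEquiv.piLpCongrLeft 2 ℝ ℝ finSumFinEquiv.symm).trans
    (PiLp.sumPiLpEquivProdLpPiLp 2 _)

theorem EuclideanSpace.finAddEquivL2Prod_apply_fst {n m : ℕ}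
    (x : EuclideanSpace ℝ (Fin (n + m))) :
    (finAddEquivL2Prod n m x).fst =
      (EuclideanSpace.equiv (Fin n) ℝ).symm fun i => x (Fin.castAdd m i) :=
  rfl

theorem EuclideanSpace.finAddEquivL2Prod_apply_snd {n m : ℕ}
    (x : EuclideanSpace ℝ (Fin (n + m))) :
    (finAddEquivL2Prod n m x).snd =
      (EuclideanSpace.equiv (Fin m) ℝ).symm fun i => x (Fin.natAdd n i) :=
  rfl

/-- Tensor products of (negative-order) Sobolev functions: if `⟨ξ⟩^{r₁} û₁ ∈ L²(ℝ^{d₁})`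
and `⟨ξ⟩^{r₂} û₂ ∈ L²(ℝ^{d₂})` with `r₁, r₂ ≤ 0`, then the tensor product
`u₁ ⊗ u₂` lies in `L²_{r₁+r₂}(ℝ^{d₁+d₂})`. -/
theorem stmt_0 (d₁ d₂ : ℕ) (r₁ r₂ : ℝ) (hr₁ : r₁ ≤ 0) (hr₂ : r₂ ≤ 0)
    (u₁ : EuclideanSpace ℝ (Fin d₁) → ℂ) (u₂ : EuclideanSpace ℝ (Fin d₂) → ℂ)
    (hu₁ : Integrable fun ξ : EuclideanSpace ℝ (Fin d₁) =>
      (1 + ‖ξ‖ ^ 2) ^ r₁ * ‖𝓕 u₁ ξ‖ ^ 2)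
    (hu₂ : Integrable fun ξ : EuclideanSpace ℝ (Fin d₂) =>
      (1 + ‖ξ‖ ^ 2) ^ r₂ * ‖𝓕 u₂ ξ‖ ^ 2) :
    Integrable fun ξ : EuclideanSpace ℝ (Fin (d₁ + d₂)) =>
      (1 + ‖ξ‖ ^ 2) ^ (r₁ + r₂) *
        ‖𝓕 (fun x : EuclideanSpace ℝ (Fin (d₁ + d₂)) =>
            u₁ ((EuclideanSpace.equiv (Fin d₁) ℝ).symm fun i => x (Fin.castAdd d₂ i)) *
            u₂ ((EuclideanSpace.equiv (Fin d₂) ℝ).symm fun i => x (Fin.natAdd d₁ i))) ξ‖ ^ 2 := by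
  have h := (memSobolevL2_comp_linearIsometryEquiv_iff (EuclideanSpace.finAddEquivL2Prod d₁ d₂)).2
    (MemSobolevL2.mul_fst_snd hr₁ hr₂ hu₁ hu₂)
  simpa only [MemSobolevL2, Function.comp_def, EuclideanSpace.finAddEquivL2Prod_apply_fst,
    EuclideanSpace.finAddEquivL2Prod_apply_snd] using h
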